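/- Deleting a vertex of degree at most 2k+2 from a maximal (k+2)-quasiplanar convex geometric representation yields a maximal (k+2)-quasiplanar convex geometric representation on the remaining vertices: if E is maximal (k+2)-quasiplanar on a cyclically ordered vertex set V and v ∈ V has degree at most 2k+2 in E, then the set of edges of E not containing v is maximal (k+2)-quasiplanar on V \ {v} (with the induced cyclic order). -/

import Mathlib

open Finset
open scoped Classical

variable {n : ℕ}

/-- The open cyclic arc from `i` to `j` (going in the positive direction), excluding both. -/
def Arc [NeZero n] (i j : ZMod n) : Finset (ZMod n) :=
  univ.filter fun t => 0 < (t - i).val ∧ (t - i).val < (j - i).val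

/-- Number of bars on the open arc from `i` to `j` strictly longer than the shorter of `i, j`. -/
noncomputable def exceedCount [NeZero n] (ℓ : ZMod n → ℝ) (i j : ZMod n) : ℕ :=
  ((Arc i j).filter fun t => min (ℓ i) (ℓ j) < ℓ t).card

/-- The cylindrical semi-bar `k`-visibility graph: `i ≠ j` are adjacent iff on one of the two
open cyclic arcs between them at most `k` bars are longer than `min (ℓ i) (ℓ j)`. -/
noncomputable def CylGraph (k : ℕ) [NeZero n] (ℓ : ZMod n → ℝ) : SimpleGraph (ZMod n) where
  Adj i j := i ≠ j ∧ (exceedCount ℓ i j ≤ k ∨ exceedCount ℓ j i ≤ k)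
  symm := ⟨fun i j h => ⟨h.1.symm, h.2.symm⟩⟩
  loopless := ⟨fun i h => h.1 rfl⟩

noncomputable instance (k : ℕ) [NeZero n] (ℓ : ZMod n → ℝ) :
    DecidableRel (CylGraph k ℓ).Adj := Classical.decRel _

/-- Two chords `{a,b}` and `{c,d}` with all four endpoints distinct cross iff exactly one of
`c, d` lies on the open cyclic arc from `a` to `b`. -/
def Crosses [NeZero n] (a b c d : ZMod n) : Prop :=
  a ≠ b ∧ c ≠ d ∧ a ≠ c ∧ a ≠ d ∧ b ≠ c ∧ b ≠ d ∧
    Xor' (c ∈ Arc a b) (d ∈ Arc a b)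

/-- A convex geometric representation (edges drawn as chords of the cyclic order on `ZMod n`)
is `m`-quasiplanar if it has no `m` pairwise crossing edges. -/
def QuasiPlanar (m : ℕ) [NeZero n] (G : SimpleGraph (ZMod n)) : Prop :=
  ¬ ∃ f g : Fin m → ZMod n, (∀ p, G.Adj (f p) (g p)) ∧
      ∀ p q, p ≠ q → Crosses (f p) (g p) (f q) (g q)

/-- Maximality: adding any absent chord creates `m` pairwise crossing edges. -/
def MaximalQP (m : ℕ) [NeZero n] (G : SimpleGraph (ZMod n)) : Prop :=
  ∀ a b : ZMod n, a ≠ b → ¬ G.Adj a b →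
    ¬ QuasiPlanar m (G ⊔ SimpleGraph.fromEdgeSet {s(a, b)})

/-- The representation obtained by deleting the vertex `v` and all edges through it. -/
def Del [NeZero n] (G : SimpleGraph (ZMod n)) (v : ZMod n) : SimpleGraph (ZMod n) where
  Adj a b := G.Adj a b ∧ a ≠ v ∧ b ≠ v
  symm := ⟨fun a b h => ⟨h.1.symm, h.2.2, h.2.1⟩⟩
  loopless := ⟨fun a h => G.loopless.irrefl a h.1⟩

/-!
In `k + 2` pairwise crossing chords, each chord is crossed by the other `k + 1`; these have
pairwise distinct endpoints, one of them strictly inside each of the two arcs cut off by the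
chord, so both arcs contain at least `k + 1` vertices. Hence a chord joining a vertex to one of its
`k + 1` nearest vertices on either side lies in no such family: maximality forces all these
chords to be present, and a vertex `v` of degree at most `2k + 2` has no other neighbours. So no
family of `k + 2` pairwise crossing chords passes through `v`, and deleting `v` neither creates
nor destroys such families among the chords between the remaining vertices.
-/

namespace ZMod

theorem val_add_val_eq_or [NeZero n] (a b : ZMod n) :
    a.val + b.val = (a + b).val ∨ a.val + b.val = (a + b).val + n := by
  rcases lt_or_ge (a.val + b.val) n with h | h
  · exact .inl (val_add_of_lt h).symm
  · exact .inr (val_add_val_of_le h)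

theorem val_sub_pos {x y : ZMod n} (h : x ≠ y) : 0 < (x - y).val :=
  val_pos.2 (sub_ne_zero.2 h)

end ZMod

section Chords

variable [NeZero n]

theorem mem_Arc {i j t : ZMod n} :
    t ∈ Arc i j ↔ 0 < (t - i).val ∧ (t - i).val < (j - i).val := by
  simp [Arc]

theorem card_Arc_le (x y : ZMod n) : #(Arc x y) ≤ (y - x).val - 1 := by
  have h : #(Arc x y) ≤ #(Ioo 0 (y - x).val) := by
    refine card_le_card_of_injOn (fun t => (t - x).val) (fun t ht => ?_) fun t _ t' _ h => ?_
    · simpa using mem_Arc.1 ht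
    · exact sub_left_inj.1 (ZMod.val_injective n h)
  simpa using h

theorem mem_Arc_swap {x y t : ZMod n} (hxy : x ≠ y) (htx : t ≠ x) (hty : t ≠ y) :
    t ∈ Arc y x ↔ t ∉ Arc x y := by
  have h₁ := ZMod.val_add_val_eq_or (t - y) (y - x)
  have h₂ := ZMod.val_add_val_eq_or (x - y) (y - x)
  simp only [sub_add_sub_cancel, sub_self, ZMod.val_zero] at h₁ h₂
  have := ZMod.val_sub_pos htx
  have := ZMod.val_sub_pos hty
  have := ZMod.val_sub_pos hxy.symm
  have := ZMod.val_lt (t - y)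
  have := ZMod.val_lt (t - x)
  rw [mem_Arc, mem_Arc]
  omega

theorem Crosses.swap {a b c d : ZMod n} (h : Crosses a b c d) : Crosses b a c d := by
  obtain ⟨hab, hcd, hac, had, hbc, hbd, hx⟩ := h
  refine ⟨hab.symm, hcd, hbc, hbd, hac, had, ?_⟩
  rw [mem_Arc_swap hab hac.symm hbc.symm, mem_Arc_swap hab had.symm hbd.symm]
  exact xor_not_not.2 hx

theorem Crosses.mem_Arc_or {a b c d : ZMod n} (h : Crosses a b c d) :
    c ∈ Arc a b ∨ d ∈ Arc a b :=
  Xor.or h.2.2.2.2.2.2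

def PairwiseCrossing {m : ℕ} (f g : Fin m → ZMod n) : Prop :=
  ∀ p q, p ≠ q → Crosses (f p) (g p) (f q) (g q)

/-- Chords crossing each other share no endpoint, so choosing an endpoint in `A` is injective. -/
theorem PairwiseCrossing.le_card {m : ℕ} {f g : Fin (m + 1) → ZMod n} (hcr : PairwiseCrossing f g)
    (p : Fin (m + 1)) (A : Finset (ZMod n)) (hA : ∀ q, q ≠ p → f q ∈ A ∨ g q ∈ A) : m ≤ #A := by
  let e : Fin (m + 1) → ZMod n := fun q => if f q ∈ A then f q else g q
  have he : ∀ q, e q = f q ∨ e q = g q := fun q => by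
    by_cases h : f q ∈ A <;> simp [e, h]
  have hmaps : ∀ q ∈ univ.erase p, e q ∈ A := fun q hq => by
    rcases hA q (ne_of_mem_erase hq) with h | h <;> by_cases h' : f q ∈ A <;> simp_all [e]
  have hinj : Set.InjOn e (univ.erase p) := fun q _ q' _ heq => by
    by_contra hne
    obtain ⟨-, -, h₁, h₂, h₃, h₄, -⟩ := hcr q q' hne
    rcases he q with h | h <;> rcases he q' with h' | h' <;> rw [h, h'] at heq <;> contradiction
  simpa using card_le_card_of_injOn e hmaps hinj

end Chords

section Quasiplanar

def cyclicDist (x y : ZMod n) : ℕ := min (y - x).val (x - y).val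

theorem cyclicDist_comm (x y : ZMod n) : cyclicDist x y = cyclicDist y x := min_comm _ _

variable [NeZero n] {k : ℕ}

theorem cyclicDist_self_add_natCast (v : ZMod n) {j : ℕ} (hj : j < n) :
    cyclicDist v (v + j) = min j (n - j) := by
  have h := ZMod.val_add_val_eq_or (j : ZMod n) (-j)
  rw [add_neg_cancel, ZMod.val_zero, ZMod.val_cast_of_lt hj] at h
  rw [cyclicDist, add_sub_cancel_left, sub_add_cancel_left, ZMod.val_cast_of_lt hj]
  rcases Nat.eq_zero_or_pos j with rfl | hj0
  · simp
  · omega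

theorem PairwiseCrossing.lt_cyclicDist {f g : Fin (k + 2) → ZMod n}
    (hcr : PairwiseCrossing f g) (p : Fin (k + 2)) : k + 1 < cyclicDist (f p) (g p) := by
  by_contra! h
  rcases min_le_iff.1 h with h | h
  · have := hcr.le_card p (Arc (f p) (g p)) fun q hq => (hcr p q hq.symm).mem_Arc_or
    have := card_Arc_le (f p) (g p)
    omega
  · have := hcr.le_card p (Arc (g p) (f p)) fun q hq => (hcr p q hq.symm).swap.mem_Arc_or
    have := card_Arc_le (g p) (f p)
    omega

theorem QuasiPlanar.mono {m : ℕ} {G H : SimpleGraph (ZMod n)} (hle : G ≤ H)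
    (hH : QuasiPlanar m H) : QuasiPlanar m G :=
  fun ⟨f, g, hadj, hcr⟩ => hH ⟨f, g, fun p => hle (hadj p), hcr⟩

theorem QuasiPlanar.sup_edge_of_cyclicDist_le {G : SimpleGraph (ZMod n)}
    (hG : QuasiPlanar (k + 2) G) {x y : ZMod n} (h : cyclicDist x y ≤ k + 1) :
    QuasiPlanar (k + 2) (G ⊔ SimpleGraph.fromEdgeSet {s(x, y)}) := by
  rintro ⟨f, g, hadj, hcr⟩
  refine hG ⟨f, g, fun p => ?_, hcr⟩
  rcases hadj p with hp | ⟨hp, -⟩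
  · exact hp
  · have := PairwiseCrossing.lt_cyclicDist hcr p
    rcases Sym2.eq_iff.1 hp with ⟨hx, hy⟩ | ⟨hx, hy⟩
    · rw [hx, hy] at this; omega
    · rw [hx, hy, cyclicDist_comm] at this; omega

theorem QuasiPlanar.of_del {G : SimpleGraph (ZMod n)} {v : ZMod n}
    (hG : QuasiPlanar (k + 2) (Del G v)) (hv : ∀ u, G.Adj v u → cyclicDist v u ≤ k + 1) :
    QuasiPlanar (k + 2) G := by
  rintro ⟨f, g, hadj, hcr⟩
  have hlong := PairwiseCrossing.lt_cyclicDist hcr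
  refine hG ⟨f, g, fun p => ⟨hadj p, fun hf => ?_, fun hg => ?_⟩, hcr⟩
  · have := hv (g p) (hf ▸ hadj p)
    have := hlong p
    rw [hf] at this; omega
  · have := hv (f p) (hg ▸ (hadj p).symm)
    have := hlong p
    rw [hg, cyclicDist_comm] at this; omega

namespace MaximalQP

variable {E : SimpleGraph (ZMod n)}

theorem adj_of_cyclicDist_le (hmax : MaximalQP (k + 2) E) (hq : QuasiPlanar (k + 2) E)
    {x y : ZMod n} (hxy : x ≠ y) (h : cyclicDist x y ≤ k + 1) :
    E.Adj x y :=
  by_contra fun hn => hmax x y hxy hn (hq.sup_edge_of_cyclicDist_le h)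

/-- If `v` had a far neighbour `u`, then `u` together with the `k + 1` nearest vertices on each
side of `v` would give `v` degree at least `2k + 3`. -/
theorem cyclicDist_le_of_adj (hmax : MaximalQP (k + 2) E) (hq : QuasiPlanar (k + 2) E)
    {v u : ZMod n} (hd : #(univ.filter (E.Adj v)) ≤ 2 * k + 2)
    (hu : E.Adj v u) : cyclicDist v u ≤ k + 1 := by
  by_contra! hfar
  have hsum := ZMod.val_add_val_eq_or (u - v) (v - u)
  rw [sub_add_sub_cancel, sub_self, ZMod.val_zero] at hsum
  have := ZMod.val_sub_pos hu.ne'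
  have := ZMod.val_sub_pos hu.ne
  set m := (u - v).val with hm
  have hmu : v + (m : ZMod n) = u := by rw [hm, ZMod.natCast_zmod_val, add_sub_cancel]
  unfold cyclicDist at hfar
  set T : Finset ℕ := Icc 1 (k + 1) ∪ Ico (n - (k + 1)) n ∪ {m}
  have hT_mem : ∀ j ∈ T, j < n ∧ (j = m ∨ 0 < j ∧ min j (n - j) ≤ k + 1) := fun j hj => by
    simp only [T, mem_union, mem_Icc, mem_Ico, mem_singleton] at hj
    omega
  have hT : #T = 2 * k + 3 := by
    rw [card_union_of_disjoint, card_union_of_disjoint, Nat.card_Icc, Nat.card_Ico, card_singleton]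
    · omega
    all_goals simp only [disjoint_left, mem_union, mem_Icc, mem_Ico, mem_singleton]; omega
  have hinj : Set.InjOn (fun j : ℕ => v + (j : ZMod n)) T := fun j hj j' hj' h => by
    rw [← ZMod.val_cast_of_lt (hT_mem j hj).1, ← ZMod.val_cast_of_lt (hT_mem j' hj').1,
      add_left_cancel h]
  have hsub : T.image (fun j : ℕ => v + (j : ZMod n)) ⊆ univ.filter (E.Adj v) := by
    simp only [subset_iff, mem_image, mem_filter_univ]
    rintro _ ⟨j, hj, rfl⟩
    obtain ⟨hjn, rfl | ⟨hj0, hjk⟩⟩ := hT_mem j hj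
    · rwa [hmu]
    · refine hmax.adj_of_cyclicDist_le hq (fun h => ?_) (by rwa [cyclicDist_self_add_natCast v hjn])
      have := ZMod.val_cast_of_lt hjn
      rw [left_eq_add.1 h, ZMod.val_zero] at this
      omega
  have := card_le_card hsub
  rw [card_image_of_injOn hinj] at this
  omega

end MaximalQP

end Quasiplanar

/-- deleting a vertex of degree at most `2k+2` from a maximal
`(k+2)`-quasiplanar convex geometric representation yields a representation on the remaining
vertices that is again `(k+2)`-quasiplanar and maximal (no chord between two remaining
vertices can be added without creating `k+2` pairwise crossing edges). -/
theorem stmt14 (k : ℕ) [NeZero n] (E : SimpleGraph (ZMod n))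
    (hq : QuasiPlanar (k + 2) E) (hmax : MaximalQP (k + 2) E) (v : ZMod n)
    (hd : (univ.filter fun u => E.Adj v u).card ≤ 2 * k + 2) :
    QuasiPlanar (k + 2) (Del E v) ∧
    ∀ a b : ZMod n, a ≠ v → b ≠ v → a ≠ b → ¬ (Del E v).Adj a b →
      ¬ QuasiPlanar (k + 2) ((Del E v) ⊔ SimpleGraph.fromEdgeSet {s(a, b)}) := by
  refine ⟨hq.mono fun _ _ h => h.1, fun a b hav hbv hab hnadj hQP => ?_⟩
  set G := E ⊔ SimpleGraph.fromEdgeSet {s(a, b)}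
  have hdel : Del G v ≤ Del E v ⊔ SimpleGraph.fromEdgeSet {s(a, b)} := by
    rintro x y ⟨hxy | hxy, hx, hy⟩
    · exact .inl ⟨hxy, hx, hy⟩
    · exact .inr hxy
  have hnbr : ∀ u, G.Adj v u → E.Adj v u := by
    rintro u (hu | ⟨hu, -⟩)
    · exact hu
    · rcases Sym2.eq_iff.1 hu with ⟨h, -⟩ | ⟨h, -⟩
      exacts [(hav h.symm).elim, (hbv h.symm).elim]
  exact hmax a b hab (fun h => hnadj ⟨h, hav, hbv⟩)
    ((hQP.mono hdel).of_del fun u hu => hmax.cyclicDist_le_of_adj hq hd (hnbr u hu))
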